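/- The span of the vectors |η_ℓ^j⟩ is invariant under U_β, and in this basis U_β acts by the matrix u_β with entries ⟨ℓ′,j′|u_β|ℓ,j⟩ = (−1)^j (1 − 2(ℓ+j)/(r+1)) δ_{ℓℓ′} δ_{jj′} + 2 √((ℓ+j)/(r+1)) √(1 − (ℓ+j)/(r+1)) δ_{ℓ−(−1)^j, ℓ′} δ_{1⊕j, j′}. -/

import Mathlib

/-- The set `η_ℓ^j = {(S,y) ∈ V : |S ∩ K| = ℓ, |{y} ∩ K| = j}`. -/
def etaSet (N r : ℕ) (K : Finset (Fin N)) (l j : ℕ) :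
    Finset {p : Finset (Fin N) × Fin N // p.1.card = r ∧ p.2 ∉ p.1} :=
  Finset.univ.filter (fun p => (p.val.1 ∩ K).card = l ∧ ({p.val.2} ∩ K).card = j)

/-- The normalized uniform superposition `|η_ℓ^j⟩`. -/
noncomputable def etaVec (N r : ℕ) (K : Finset (Fin N)) (l j : ℕ) :
    {p : Finset (Fin N) × Fin N // p.1.card = r ∧ p.2 ∉ p.1} → ℂ :=
  fun p => if p ∈ etaSet N r K l j
    then ((1 / Real.sqrt ((etaSet N r K l j).card) : ℝ) : ℂ) else 0

/-- `|β_{[S,y]}⟩ = (r+1)^{-1/2} ∑_{y' ∈ S∪{y}} |S∪{y}\{y'}, y'⟩`, indexed by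
the `(r+1)`-subset `T = S ∪ {y}`. -/
noncomputable def betaVec (N r : ℕ) (T : Finset (Fin N)) :
    {p : Finset (Fin N) × Fin N // p.1.card = r ∧ p.2 ∉ p.1} → ℂ :=
  fun p => if insert p.val.2 p.val.1 = T then ((1 / Real.sqrt (r + 1) : ℝ) : ℂ) else 0

/-- The operator `U_β = 2 ∑_{[S,y]} |β_{[S,y]}⟩⟨β_{[S,y]}| - I`. -/
noncomputable def Ubeta (N r : ℕ) :
    Matrix {p : Finset (Fin N) × Fin N // p.1.card = r ∧ p.2 ∉ p.1}
      {p : Finset (Fin N) × Fin N // p.1.card = r ∧ p.2 ∉ p.1} ℂ :=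
  (2 : ℂ) • (∑ T ∈ Finset.univ.filter (fun T : Finset (Fin N) => T.card = r + 1),
      Matrix.vecMulVec (betaVec N r T) (star (betaVec N r T))) - 1

/-- The index set of valid pairs `(ℓ,j)`, excluding `(k,1)`. -/
def pairSet (k : ℕ) : Finset (ℕ × ℕ) :=
  (Finset.range (k + 1) ×ˢ Finset.range 2).filter (fun q => ¬(q.1 = k ∧ q.2 = 1))

/-- The matrix element `⟨ℓ',j'|u_β|ℓ,j⟩`. -/
noncomputable def uBetaEntry (r : ℕ) (l j l' j' : ℕ) : ℝ :=
  (-1 : ℝ) ^ j * (1 - 2 * ((l : ℝ) + j) / ((r : ℝ) + 1))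
      * (if l = l' ∧ j = j' then 1 else 0)
    + 2 * Real.sqrt (((l : ℝ) + j) / ((r : ℝ) + 1))
        * Real.sqrt (1 - ((l : ℝ) + j) / ((r : ℝ) + 1))
        * (if (l : ℤ) - (-1 : ℤ) ^ j = (l' : ℤ) ∧ 1 - j = j' then 1 else 0)

/-!
Each `β_T` is the uniform vector on the `r + 1` vertices `(T \ {y}, y)` with `y ∈ T`, so
`(U_β v)(S, y)` is `2 / (r + 1)` times the sum of `v` over the vertices with the same union
`T = S ∪ {y}`, minus `v (S, y)`. For `v = η_ℓ^j` that sum only depends on the level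
`m = |T ∩ K| = |S ∩ K| + |{y} ∩ K|`: it vanishes unless `m = ℓ + j`, and then it is
`fiberCard r ℓ j / √|η_ℓ^j|`, where `fiberCard r ℓ j` counts the `y ∈ T` with
`(T \ {y}, y) ∈ η_ℓ^j`. Counting `η_ℓ^j` along the same fibres gives
`|η_ℓ^j| = fiberCard r ℓ j · #{T : |T| = r + 1, |T ∩ K| = ℓ + j}`, so the two classes
`(m, 0)` and `(m - 1, 1)` of level `m` have sizes in the ratio `(r + 1 - m) : m`, which turns the
coefficients into the entries of `u_β`.
-/

open Finset Matrix

abbrev Vertex (N r : ℕ) := {p : Finset (Fin N) × Fin N // p.1.card = r ∧ p.2 ∉ p.1}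

def fiberCard (r l j : ℕ) : ℕ := if j = 1 then l + 1 else r + 1 - l

lemma card_singleton_inter_eq_ite {α : Type*} [DecidableEq α] (y : α) (K : Finset α) :
    #({y} ∩ K) = if y ∈ K then 1 else 0 := by
  split_ifs with h <;> simp [h]

lemma card_insert_inter_of_notMem {α : Type*} [DecidableEq α] {s : Finset α} {y : α}
    (hy : y ∉ s) (K : Finset α) : #(insert y s ∩ K) = #(s ∩ K) + #({y} ∩ K) := by
  rw [insert_eq, union_inter_distrib_right, add_comm, card_union_of_disjoint
    ((disjoint_singleton_left.2 hy).mono inter_subset_left inter_subset_left)]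

lemma mem_etaSet {N r l j : ℕ} {K : Finset (Fin N)} {p : Vertex N r} :
    p ∈ etaSet N r K l j ↔ #(p.1.1 ∩ K) = l ∧ #({p.1.2} ∩ K) = j := by
  simp [etaSet]

lemma card_filter_etaSet_insert_eq {N r l j : ℕ} (K : Finset (Fin N)) (hj : j ≤ 1)
    {T : Finset (Fin N)} (hT : #T = r + 1) :
    #{p ∈ etaSet N r K l j | insert p.1.2 p.1.1 = T}
      = if #(T ∩ K) = l + j then fiberCard r l j else 0 := by
  have hsplit : #{p ∈ etaSet N r K l j | insert p.1.2 p.1.1 = T}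
      = #{y ∈ T | #(T.erase y ∩ K) = l ∧ #({y} ∩ K) = j} := by
    have herase : ∀ p : Vertex N r, insert p.1.2 p.1.1 = T → T.erase p.1.2 = p.1.1 :=
      fun p hp => hp ▸ erase_insert p.2.2
    refine card_bij' (fun p _ => p.1.2)
      (fun y hy => ⟨(T.erase y, y), by grind [card_erase_of_mem], notMem_erase y T⟩)
      (fun p hp => ?_) (fun y hy => ?_) (fun p hp => ?_) (fun y _ => rfl)
    · simp only [mem_filter, mem_etaSet] at hp ⊢
      obtain ⟨⟨hl, hj⟩, hT⟩ := hp
      exact ⟨hT ▸ mem_insert_self _ _, herase p hT ▸ hl, hj⟩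
    · simp only [mem_filter, mem_etaSet] at hy ⊢
      exact ⟨⟨hy.2.1, hy.2.2⟩, insert_erase hy.1⟩
    · exact Subtype.ext (Prod.ext (herase p (mem_filter.1 hp).2) rfl)
  have hlevel : ∀ y ∈ T, #(T.erase y ∩ K) + #({y} ∩ K) = #(T ∩ K) := fun y hy => by
    rw [← card_insert_inter_of_notMem (notMem_erase y T), insert_erase hy]
  rw [hsplit]
  split_ifs with h
  · rw [filter_congr fun y hy =>
      ⟨fun h' => h'.2, fun h' => ⟨by have := hlevel y hy; omega, h'⟩⟩]
    interval_cases j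
    · simp only [card_singleton_inter_eq_ite, ite_eq_right_iff, one_ne_zero, imp_false,
        filter_notMem_eq_sdiff, fiberCard, zero_ne_one, if_false]
      have := card_sdiff_add_card_inter T K
      omega
    · simp only [card_singleton_inter_eq_ite, ite_eq_left_iff, zero_ne_one, imp_false, not_not,
        filter_mem_eq_inter, fiberCard, if_true]
      omega
  · rw [card_eq_zero, filter_eq_empty_iff]
    rintro y hy ⟨h1, h2⟩
    exact h (by rw [← hlevel y hy, h1, h2])

lemma card_etaSet_eq {N r l j : ℕ} (K : Finset (Fin N)) (hj : j ≤ 1) :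
    #(etaSet N r K l j)
      = fiberCard r l j * #{T : Finset (Fin N) | #T = r + 1 ∧ #(T ∩ K) = l + j} := by
  have hmaps : Set.MapsTo (fun p : Vertex N r => insert p.1.2 p.1.1) (etaSet N r K l j)
      ({T : Finset (Fin N) | #T = r + 1} : Finset _) := fun p _ => by
    simp [card_insert_of_notMem p.2.2, p.2.1]
  rw [card_eq_sum_card_fiberwise hmaps,
    sum_congr rfl fun T hT => card_filter_etaSet_insert_eq K hj (mem_filter.1 hT).2,
    ← sum_filter, sum_const, smul_eq_mul, filter_filter, mul_comm]

lemma Ubeta_mulVec_apply {N r : ℕ} (v : Vertex N r → ℂ) (p : Vertex N r) :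
    (Ubeta N r *ᵥ v) p
      = 2 / (r + 1) * ∑ p' ∈ {p' : Vertex N r | insert p'.1.2 p'.1.1 = insert p.1.2 p.1.1}, v p'
        - v p := by
  simp only [Ubeta, sub_mulVec, smul_mulVec, sum_mulVec, vecMulVec_mulVec, one_mulVec,
    Pi.sub_apply, Pi.smul_apply, Finset.sum_apply, op_smul_eq_smul, smul_eq_mul]
  congr 1
  have hβ : ((1 / √(r + 1) : ℝ) : ℂ) * ((1 / √(r + 1) : ℝ) : ℂ) = 1 / (r + 1) := by
    rw [← Complex.ofReal_mul, one_div_mul_one_div, Real.mul_self_sqrt (by positivity)]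
    push_cast; rfl
  rw [sum_eq_single_of_mem (insert p.1.2 p.1.1) (by simp [card_insert_of_notMem p.2.2, p.2.1])
    fun T _ hT => by simp [betaVec, Ne.symm hT]]
  simp only [betaVec, if_true, dotProduct, Pi.star_apply, apply_ite star, star_zero, ite_mul,
    zero_mul, ← sum_filter, ← mul_sum, Complex.star_def, Complex.conj_ofReal]
  rw [mul_right_comm, hβ, ← mul_assoc, mul_one_div]

lemma etaVec_apply {N r l j : ℕ} (K : Finset (Fin N)) (p : Vertex N r) :
    etaVec N r K l j p
      = ((if #(p.1.1 ∩ K) = l ∧ #({p.1.2} ∩ K) = j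
            then 1 / √(#(etaSet N r K l j) : ℝ) else 0 : ℝ) : ℂ) := by
  simp only [etaVec, mem_etaSet, apply_ite Complex.ofReal, Complex.ofReal_zero]

lemma Ubeta_mulVec_etaVec_apply {N r l j : ℕ} (K : Finset (Fin N)) (hj : j ≤ 1)
    (p : Vertex N r) :
    (Ubeta N r *ᵥ etaVec N r K l j) p
      = ((2 / (r + 1)
            * (if #(p.1.1 ∩ K) + #({p.1.2} ∩ K) = l + j then fiberCard r l j else 0 : ℕ)
            * (1 / √(#(etaSet N r K l j) : ℝ))
          - if #(p.1.1 ∩ K) = l ∧ #({p.1.2} ∩ K) = j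
              then 1 / √(#(etaSet N r K l j) : ℝ) else 0 : ℝ) : ℂ) := by
  rw [Ubeta_mulVec_apply, etaVec_apply]
  simp only [etaVec]
  rw [sum_ite_mem, filter_inter, univ_inter, sum_const, nsmul_eq_mul,
    card_filter_etaSet_insert_eq K hj (by rw [card_insert_of_notMem p.2.2, p.2.1]),
    card_insert_inter_of_notMem p.2.2]
  push_cast [apply_ite Complex.ofReal]
  ring

lemma two_div_mul_one_div_sqrt_eq {R x y M : ℝ} (hR : 0 < R) (hx : 0 < x) (hy : 0 ≤ y)
    (hM : 0 ≤ M) :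
    2 / R * y * (1 / √(y * M)) = 2 * √(x / R) * √(y / R) * (1 / √(x * M)) := by
  rcases hy.eq_or_lt with rfl | hy
  · simp
  rcases hM.eq_or_lt with rfl | hM
  · simp
  have hx' := Real.sqrt_pos.2 hx
  have hy' := Real.sqrt_pos.2 hy
  have hR' := Real.sqrt_pos.2 hR
  have hM' := Real.sqrt_pos.2 hM
  rw [Real.sqrt_mul hy.le, Real.sqrt_mul hx.le, Real.sqrt_div hx.le, Real.sqrt_div hy.le]
  field_simp
  rw [Real.sq_sqrt hR.le, Real.sq_sqrt hy.le, mul_comm]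

lemma one_sub_div_eq_div {r : ℕ} {x y : ℝ} (h : x + y = r + 1) :
    1 - x / (r + 1) = y / (r + 1) := by
  rw [eq_div_iff (by positivity), sub_mul, div_mul_cancel₀ _ (by positivity)]
  linarith

lemma Ubeta_mulVec_etaVec_zero {N r : ℕ} (K : Finset (Fin N)) (l : ℕ) :
    Ubeta N r *ᵥ etaVec N r K l 0
      = ((1 - 2 * l / (r + 1) : ℝ) : ℂ) • etaVec N r K l 0
        + ((2 * √(l / (r + 1)) * √(1 - l / (r + 1)) : ℝ) : ℂ)
          • etaVec N r K (l - 1) 1 := by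
  funext p
  have ha : #(p.1.1 ∩ K) ≤ r := (card_le_card inter_subset_left).trans_eq p.2.1
  have hb : #({p.1.2} ∩ K) ≤ 1 := card_singleton_inter
  rw [Ubeta_mulVec_etaVec_apply K zero_le_one, Pi.add_apply, Pi.smul_apply, Pi.smul_apply,
    etaVec_apply, etaVec_apply, smul_eq_mul, smul_eq_mul, ← Complex.ofReal_mul,
    ← Complex.ofReal_mul, ← Complex.ofReal_add, Complex.ofReal_inj]
  generalize #(p.1.1 ∩ K) = a at ha ⊢
  generalize #({p.1.2} ∩ K) = b at hb ⊢
  simp only [fiberCard, zero_ne_one, if_false]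
  split_ifs <;> try omega
  · rw [Nat.cast_sub (by omega)]
    push_cast
    field_simp
    ring
  · obtain ⟨hl₁, hlr⟩ : 1 ≤ l ∧ l ≤ r + 1 := by omega
    rw [card_etaSet_eq K zero_le_one, card_etaSet_eq K le_rfl,
      one_sub_div_eq_div (x := l) (y := ((r + 1 - l : ℕ) : ℝ))
        (by rw [Nat.cast_sub hlr]; push_cast; ring)]
    simp only [fiberCard, zero_ne_one, if_false, if_true, add_zero,
      Nat.sub_add_cancel hl₁, sub_zero, mul_zero, zero_add, Nat.cast_mul]
    exact two_div_mul_one_div_sqrt_eq (by positivity) (by exact_mod_cast hl₁)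
      (Nat.cast_nonneg _) (Nat.cast_nonneg _)
  · obtain rfl : l = 0 := by omega
    simp
  · simp

lemma Ubeta_mulVec_etaVec_one {N r : ℕ} (K : Finset (Fin N)) (l : ℕ) :
    Ubeta N r *ᵥ etaVec N r K l 1
      = ((-(1 - 2 * (l + 1) / (r + 1)) : ℝ) : ℂ) • etaVec N r K l 1
        + ((2 * √((l + 1) / (r + 1)) * √(1 - (l + 1) / (r + 1)) : ℝ) : ℂ)
          • etaVec N r K (l + 1) 0 := by
  funext p
  have ha : #(p.1.1 ∩ K) ≤ r := (card_le_card inter_subset_left).trans_eq p.2.1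
  have hb : #({p.1.2} ∩ K) ≤ 1 := card_singleton_inter
  rw [Ubeta_mulVec_etaVec_apply K le_rfl, Pi.add_apply, Pi.smul_apply, Pi.smul_apply,
    etaVec_apply, etaVec_apply, smul_eq_mul, smul_eq_mul, ← Complex.ofReal_mul,
    ← Complex.ofReal_mul, ← Complex.ofReal_add, Complex.ofReal_inj]
  generalize #(p.1.1 ∩ K) = a at ha ⊢
  generalize #({p.1.2} ∩ K) = b at hb ⊢
  simp only [fiberCard, if_true]
  split_ifs <;> try omega
  · push_cast
    field_simp
    ring
  · have hlr : l + 1 ≤ r := by omega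
    rw [card_etaSet_eq K le_rfl, card_etaSet_eq K zero_le_one,
      one_sub_div_eq_div (x := l + 1) (y := ((r - l : ℕ) : ℝ))
        (by rw [Nat.cast_sub (by omega)]; ring)]
    simp only [fiberCard, if_true, zero_ne_one, if_false, add_zero, Nat.add_sub_add_right,
      sub_zero, mul_zero, zero_add, Nat.cast_mul, Nat.cast_add, Nat.cast_one]
    rw [mul_right_comm 2]
    exact two_div_mul_one_div_sqrt_eq (by positivity) (by exact_mod_cast Nat.sub_pos_of_lt hlr)
      (by positivity) (Nat.cast_nonneg _)
  · simp

lemma sum_pairSet_uBetaEntry_zero_smul {E : Type*} [AddCommMonoid E] [Module ℂ E] (r : ℕ)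
    {k l : ℕ} (hl : l ≤ k) (v : ℕ → ℕ → E) :
    ∑ q ∈ pairSet k, ((uBetaEntry r l 0 q.1 q.2 : ℝ) : ℂ) • v q.1 q.2
      = ((1 - 2 * l / (r + 1) : ℝ) : ℂ) • v l 0
        + ((2 * √(l / (r + 1)) * √(1 - l / (r + 1)) : ℝ) : ℂ) • v (l - 1) 1 := by
  rw [sum_eq_add (l, 0) (l - 1, 1) (by simp) ?_ ?_ ?_]
  · rcases Nat.eq_zero_or_pos l with rfl | hl₀
    · simp [uBetaEntry]
    · simp [uBetaEntry, show (l : ℤ) - 1 = ((l - 1 : ℕ) : ℤ) by omega]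
  · rintro ⟨l', j'⟩ - ⟨hdiag, hoff⟩
    rw [uBetaEntry, if_neg (by rintro ⟨rfl, rfl⟩; exact hdiag rfl),
      if_neg (by rintro ⟨h, rfl⟩; exact hoff (Prod.ext (by simp; omega) rfl))]
    simp
  · simp [pairSet]; omega
  · intro h
    obtain rfl : l = 0 := by simp [pairSet] at h; omega
    simp [uBetaEntry]

lemma sum_pairSet_uBetaEntry_one_smul {E : Type*} [AddCommMonoid E] [Module ℂ E] (r : ℕ)
    {k l : ℕ} (hl : l < k) (v : ℕ → ℕ → E) :
    ∑ q ∈ pairSet k, ((uBetaEntry r l 1 q.1 q.2 : ℝ) : ℂ) • v q.1 q.2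
      = ((-(1 - 2 * (l + 1) / (r + 1)) : ℝ) : ℂ) • v l 1
        + ((2 * √((l + 1) / (r + 1)) * √(1 - (l + 1) / (r + 1)) : ℝ) : ℂ)
          • v (l + 1) 0 := by
  rw [sum_eq_add (l, 1) (l + 1, 0) (by simp) ?_ (fun h => by simp [pairSet] at h; omega)
    (fun h => by simp [pairSet] at h; omega)]
  · simp [uBetaEntry]
  · rintro ⟨l', j'⟩ - ⟨hdiag, hoff⟩
    rw [uBetaEntry, if_neg (by rintro ⟨rfl, rfl⟩; exact hdiag rfl),
      if_neg (by
        rintro ⟨h, h'⟩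
        exact hoff (Prod.ext (by simp at h ⊢; omega) (by simp at h' ⊢; omega)))]
    simp

theorem stmt12_general (N r k : ℕ) (K : Finset (Fin N)) :
    ∀ q ∈ pairSet k,
      (Ubeta N r).mulVec (etaVec N r K q.1 q.2)
        = ∑ q' ∈ pairSet k,
            ((uBetaEntry r q.1 q.2 q'.1 q'.2 : ℝ) : ℂ) • etaVec N r K q'.1 q'.2 := by
  rintro ⟨l, j⟩ hq
  simp only [pairSet, mem_filter, mem_product, mem_range] at hq
  obtain ⟨⟨hl, hj⟩, hlk⟩ := hq
  interval_cases j
  · rw [Ubeta_mulVec_etaVec_zero, sum_pairSet_uBetaEntry_zero_smul r (by omega) (etaVec N r K)]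
  · rw [Ubeta_mulVec_etaVec_one, sum_pairSet_uBetaEntry_one_smul r (by omega) (etaVec N r K)]

/-- The span of the vectors `|η_ℓ^j⟩` is invariant under `U_β`, which acts on
them by the matrix `u_β`:
`U_β|η_ℓ^j⟩ = ∑_{ℓ',j'} ⟨ℓ',j'|u_β|ℓ,j⟩ |η_{ℓ'}^{j'}⟩`. -/
theorem stmt12 (N r k : ℕ) (hk : 0 < k) (hkr : k ≤ r) (hkN : k < N - r)
    (K : Finset (Fin N)) (hK : K.card = k) :
    ∀ q ∈ pairSet k,
      (Ubeta N r).mulVec (etaVec N r K q.1 q.2)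
        = ∑ q' ∈ pairSet k,
            ((uBetaEntry r q.1 q.2 q'.1 q'.2 : ℝ) : ℂ) • etaVec N r K q'.1 q'.2 :=
  stmt12_general N r k K
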